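/- If h(x) = \sum_{n\ge 0} d_n x^{n+1} in Q[[x]] satisfies h(x/(1-2x)) = h(x) + 2x^3(x-2)/(1-x)^2, then d_0 = 0 and \sum_{n=0}^{m-1} \binom{m}{n} 2^{m-n} d_n = -2m for all m \ge 2. -/

import Mathlib

open PowerSeries Finset

/-! Since x/(1-2x) = x·∑ 2^k x^k, the coefficient of x^(m+1) in (x/(1-2x))^(i+1) is
2^(m-i)·C(m,i). Comparing coefficients of x^(m+1) in the functional equation, the term d_m
cancels and ∑_{i<m} C(m,i) 2^(m-i) d_i equals the coefficient of x^(m+1) in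
2x³(x-2)/(1-x)², which is 0 for m = 1 and -2m for m ≥ 2 because
2(x-2)/(1-x)² = -∑ 2(n+2) xⁿ. -/

/-- Formal substitution f(a) = ∑_n (coeff n f) aⁿ for a power series `a` of positive
  order, defined coefficientwise (the tail vanishes since aⁿ has order ≥ n). -/
noncomputable def substPS (a f : PowerSeries ℚ) : PowerSeries ℚ :=
  PowerSeries.mk fun j => ∑ n ∈ range (j + 1), coeff n f * coeff j (a ^ n)

namespace PowerSeries

variable {R : Type*} [CommRing R]

theorem rescale_mk_one_mul_one_sub_C_mul_X (a : R) : rescale a (mk 1) * (1 - C a * X) = 1 := by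
  rw [← rescale_X, ← map_one (rescale a), ← map_sub, ← map_mul, mk_one_mul_one_sub_eq_one]

theorem inverse_one_sub_C_mul_X (a : R) : Ring.inverse (1 - C a * X) = rescale a (mk 1) :=
  Ring.inverse_unit <| Units.mkOfMulEqOne _ _ <|
    (mul_comm _ _).trans (rescale_mk_one_mul_one_sub_C_mul_X a)

theorem coeff_succ_X_mul_rescale_mk_one_pow (a : R) {i m : ℕ} (h : i ≤ m) :
    coeff (m + 1) ((X * rescale a (mk 1)) ^ (i + 1)) = a ^ (m - i) * m.choose i := by
  obtain ⟨k, rfl⟩ := Nat.exists_eq_add_of_le h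
  rw [mul_pow, ← map_pow, mk_one_pow_eq_mk_choose_add, show i + k + 1 = k + (i + 1) by ring,
    coeff_X_pow_mul, coeff_rescale, coeff_mk, Nat.add_sub_cancel_left]

theorem sum_mul_coeff_succ_X_mul_rescale_mk_one_pow (a : R) (d : ℕ → R) (m : ℕ) :
    ∑ i ∈ range (m + 1), d i * coeff (m + 1) ((X * rescale a (mk 1)) ^ (i + 1)) =
      ∑ i ∈ range m, (m.choose i : R) * a ^ (m - i) * d i + d m := by
  rw [sum_range_succ, coeff_succ_X_mul_rescale_mk_one_pow a le_rfl, Nat.sub_self,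
    Nat.choose_self, pow_zero, Nat.cast_one, one_mul, mul_one]
  congr 1
  refine sum_congr rfl fun i hi => ?_
  rw [coeff_succ_X_mul_rescale_mk_one_pow a (mem_range.mp hi).le]
  ring

theorem inverse_one_sub_X_sq :
    Ring.inverse ((1 - X : R⟦X⟧) ^ 2) = PowerSeries.mk fun n => (n + 1 : R) := by
  rw [← invOneSubPow_inv_eq_one_sub_pow]
  exact (Ring.inverse_unit (invOneSubPow R 2)⁻¹).trans (by ext n; simp [invOneSubPow, add_comm])

theorem two_mul_X_sub_two_mul_mk_succ :
    2 * (X - 2) * PowerSeries.mk (fun n => (n + 1 : R)) =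
      PowerSeries.mk fun n => -2 * ((n : R) + 2) := by
  set F : R⟦X⟧ := PowerSeries.mk fun n => (n + 1 : R)
  have hF : 2 * (X - 2) * F = C 2 * (X * F) - C 4 * F := by
    simp only [map_ofNat]; ring
  rw [hF]
  ext (_ | n)
  · simp [F]; norm_num
  · simp only [map_sub, coeff_C_mul, coeff_succ_X_mul, F, coeff_mk]; push_cast; ring

end PowerSeries

theorem coeff_succ_substPS_X_mul (a : ℚ⟦X⟧) (d : ℕ → ℚ) (m : ℕ) :
    coeff (m + 1) (substPS a (PowerSeries.mk fun n => if n = 0 then 0 else d (n - 1))) =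
      ∑ i ∈ range (m + 1), d i * coeff (m + 1) (a ^ (i + 1)) := by
  rw [substPS, coeff_mk, sum_range_succ']
  simp

theorem coeff_recursion_of_functional_equation (d : ℕ → ℚ)
    (h : substPS (X * Ring.inverse (1 - 2 * X))
          (PowerSeries.mk fun n => if n = 0 then 0 else d (n - 1)) =
        (PowerSeries.mk fun n => if n = 0 then 0 else d (n - 1)) +
          2 * X ^ 3 * (X - 2) * Ring.inverse ((1 - X) ^ 2)) :
    d 0 = 0 ∧ ∀ m : ℕ, 2 ≤ m →
      ∑ n ∈ range m, (m.choose n : ℚ) * 2 ^ (m - n) * d n = -2 * m := by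
  have hsubst : (X * Ring.inverse (1 - 2 * X) : ℚ⟦X⟧) = X * rescale 2 (mk 1) := by
    rw [← inverse_one_sub_C_mul_X, map_ofNat]
  have hcorr : (2 * X ^ 3 * (X - 2) * Ring.inverse ((1 - X) ^ 2) : ℚ⟦X⟧) =
      X ^ 3 * PowerSeries.mk fun n => -2 * ((n : ℚ) + 2) := by
    rw [inverse_one_sub_X_sq, ← two_mul_X_sub_two_mul_mk_succ]; ring
  have hcoeff (m : ℕ) : ∑ i ∈ range m, (m.choose i : ℚ) * 2 ^ (m - i) * d i =
      coeff (m + 1) (X ^ 3 * PowerSeries.mk fun n => -2 * ((n : ℚ) + 2)) := by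
    have hm := congrArg (coeff (m + 1)) h
    rw [hsubst, hcorr, coeff_succ_substPS_X_mul, sum_mul_coeff_succ_X_mul_rescale_mk_one_pow,
      map_add, coeff_mk, if_neg m.succ_ne_zero, Nat.add_sub_cancel, add_comm (d m)] at hm
    exact add_right_cancel hm
  refine ⟨?_, fun m hm => ?_⟩
  · simpa [coeff_X_pow_mul'] using hcoeff 1
  · obtain ⟨k, rfl⟩ := Nat.exists_eq_add_of_le' hm
    rw [hcoeff, show k + 2 + 1 = k + 3 from rfl, coeff_X_pow_mul, coeff_mk]
    push_cast; ring
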